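/- arXiv:2503.10155 — 10 statements merged into one kernel-verified Lean document; each statement's English description precedes it below -/
import Mathlib

section
/- Let E be a finite-dimensional real inner product space, H : E → E a positive definite self-adjoint linear operator, A : E → ℝ^m a surjective linear map, ν > 0, and x, g ∈ E, b ∈ ℝ^m such that Hx = −g, ⟨g, x⟩ = −ν, and Ax = b. Then sup{ 2⟨g,h⟩ − ⟨Hh,h⟩ : h ∈ E, Ah = 0 } = ν − ⟨(A H⁻¹ A*)⁻¹ b, b⟩. -/
open scoped RealInnerProductSpace

/-- key identity in the proof of Lemma 3.3 of the paper. Let `H` be a positive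
definite self-adjoint operator on `E` with inverse `Hinv`, `A : E → ℝ^m` surjective, and
`x, g, b` with `H x = -g`, `⟨g, x⟩ = -ν`, `A x = b`.  Then, with `Ginv` the inverse of
`A H⁻¹ A*`, one has `sup { 2⟨g,h⟩ - ⟨Hh,h⟩ : A h = 0 } = ν - ⟨(A H⁻¹ A*)⁻¹ b, b⟩`. -/
theorem stmt5 {E : Type*} [NormedAddCommGroup E] [InnerProductSpace ℝ E]
    [FiniteDimensional ℝ E] {m : ℕ}
    (H : E →ₗ[ℝ] E) (hsym : ∀ u v : E, ⟪H u, v⟫ = ⟪u, H v⟫)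
    (hpos : ∀ u : E, u ≠ 0 → 0 < ⟪H u, u⟫)
    (Hinv : E →ₗ[ℝ] E) (hHinv : Hinv ∘ₗ H = LinearMap.id) (hHinv' : H ∘ₗ Hinv = LinearMap.id)
    (A : E →ₗ[ℝ] EuclideanSpace ℝ (Fin m)) (hA : Function.Surjective A)
    (ν : ℝ) (hν : 0 < ν)
    (x g : E) (b : EuclideanSpace ℝ (Fin m))
    (hHx : H x = -g) (hgx : ⟪g, x⟫ = -ν) (hAx : A x = b)
    (Ginv : EuclideanSpace ℝ (Fin m) →ₗ[ℝ] EuclideanSpace ℝ (Fin m))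
    (hGinv : Ginv ∘ₗ (A ∘ₗ Hinv ∘ₗ (LinearMap.adjoint A)) = LinearMap.id)
    (hGinv' : (A ∘ₗ Hinv ∘ₗ (LinearMap.adjoint A)) ∘ₗ Ginv = LinearMap.id) :
    sSup {r : ℝ | ∃ h : E, A h = 0 ∧ r = 2 * ⟪g, h⟫ - ⟪H h, h⟫}
      = ν - ⟪Ginv b, b⟫ := by
  set T := LinearMap.adjoint A with hT
  set w : E := T (Ginv b) with hw
  set h₀ : E := -x + Hinv w with hh₀def
  have h1 : ∀ u, Hinv (H u) = u := fun u => LinearMap.ext_iff.mp hHinv u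
  have h2 : ∀ u, H (Hinv u) = u := fun u => LinearMap.ext_iff.mp hHinv' u
  have h3 : ∀ y, A (Hinv (T (Ginv y))) = y := fun y => by
    have := LinearMap.ext_iff.mp hGinv' y
    simpa using this
  -- Hinv g = -x
  have hxg : Hinv g = -x := by
    have hx : -Hinv g = x := by rw [← map_neg, ← hHx, h1]
    exact neg_eq_iff_eq_neg.mp hx
  -- A h₀ = 0
  have hAh₀ : A h₀ = 0 := by
    rw [hh₀def, map_add, map_neg, hAx, hw, h3]
    simp
  -- H h₀ = g + w
  have hHh₀ : H h₀ = g + w := by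
    rw [hh₀def, map_add, map_neg, hHx, h2]
    simp
  -- Hinv is symmetric
  have hinvsym : ∀ u v : E, ⟪Hinv u, v⟫ = ⟪u, Hinv v⟫ := fun u v => by
    calc ⟪Hinv u, v⟫ = ⟪Hinv u, H (Hinv v)⟫ := by rw [h2]
    _ = ⟪H (Hinv u), Hinv v⟫ := (hsym _ _).symm
    _ = ⟪u, Hinv v⟫ := by rw [h2]
  -- ⟪w, h⟫ = 0 whenever A h = 0
  have hwperp : ∀ h : E, A h = 0 → ⟪w, h⟫ = 0 := fun h hAh => by
    rw [hw, hT, LinearMap.adjoint_inner_left, hAh, inner_zero_right]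
  -- ⟪g, h₀⟫ = ν - ⟪Ginv b, b⟫
  have hgh₀ : ⟪g, h₀⟫ = ν - ⟪Ginv b, b⟫ := by
    rw [hh₀def, inner_add_right, inner_neg_right, hgx]
    have e1 : ⟪g, Hinv w⟫ = - ⟪Ginv b, b⟫ := by
      rw [← hinvsym, hxg, inner_neg_left, hw, hT, LinearMap.adjoint_inner_right, hAx,
        real_inner_comm]
    rw [e1]; ring
  -- value at h₀
  have hval : 2 * ⟪g, h₀⟫ - ⟪H h₀, h₀⟫ = ν - ⟪Ginv b, b⟫ := by
    rw [hHh₀, inner_add_left, hwperp h₀ hAh₀, hgh₀]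
    ring
  clear_value T w h₀
  apply IsGreatest.csSup_eq
  constructor
  · exact ⟨h₀, hAh₀, hval.symm⟩
  · rintro r ⟨h, hAh, rfl⟩
    set d : E := h - h₀ with hd
    have hhd : h = h₀ + d := by rw [hd]; abel
    clear_value d
    have hAd : A d = 0 := by rw [hd, map_sub, hAh, hAh₀, sub_zero]
    have hHdd : 0 ≤ ⟪H d, d⟫ := by
      rcases eq_or_ne d 0 with h0 | h0
      · simp [h0]
      · exact (hpos d h0).le
    have hgd : ⟪H h₀, d⟫ = ⟪g, d⟫ := by
      rw [hHh₀, inner_add_left, hwperp d hAd, add_zero]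
    have hsymd : ⟪H d, h₀⟫ = ⟪g, d⟫ := by
      rw [hsym, real_inner_comm, ← hgd]
    have hexp : ⟪H h, h⟫ = ⟪H h₀, h₀⟫ + 2 * ⟪g, d⟫ + ⟪H d, d⟫ := by
      rw [hhd, map_add, inner_add_left, inner_add_right, inner_add_right, hgd, hsymd]
      ring
    have hgh : ⟪g, h⟫ = ⟪g, h₀⟫ + ⟪g, d⟫ := by rw [hhd, inner_add_right]
    have : 2 * ⟪g, h⟫ - ⟪H h, h⟫ = (ν - ⟪Ginv b, b⟫) - ⟪H d, d⟫ := by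
      rw [hgh, hexp, ← hval]; ring
    linarith
end

section
/- Let E be a finite-dimensional real inner product space, H : E → E a positive definite self-adjoint linear operator, A : E → ℝ^m a surjective linear map, b ∈ ℝ^m, t > 0, and s̄, g ∈ E with H s̄ = −g. Set x̄ := −(1/t)g, let d̄ ∈ ℝ^m be the unique solution of (A H A*) d̄ = −(A g + t·b), and define ŝ := s̄ − A*d̄, x̂ := (1/t) H ŝ, and λ̄² := ⟨(A H A*) d̄, d̄⟩. Then: (i) A x̂ = b; (ii) ⟨H(ŝ − s̄), ŝ − s̄⟩ = λ̄²; (iii) t²·⟨H⁻¹(x̂ − x̄), x̂ − x̄⟩ = λ̄². -/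
open scoped RealInnerProductSpace

/-! Writing `w = A* d̄`, one has `ŝ - s̄ = -w` and, by `H s̄ = -g`, `x̂ - x̄ = -(1/t) H w`.
So (i) is the Newton equation read through `A`, while both (ii) and (iii) reduce to
`⟪H w, w⟫ = ⟪A (H w), d̄⟫`, the defining property of the adjoint; in (iii) the factor `t²`
cancels `(1/t)²` and `H⁻¹ H w = w`. -/

namespace DualGambit

section Field

variable {K E F : Type*} [Field K] [AddCommGroup E] [Module K E] [AddCommGroup F] [Module K F]
  {H : E →ₗ[K] E} {sb g : E} {t : K}

theorem map_primal_eq {A : E →ₗ[K] F} {B : F →ₗ[K] E} {b d : F} (ht : t ≠ 0)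
    (hsb : H sb = -g) (hd : A (H (B d)) = -(A g + t • b)) :
    A ((1 / t) • H (sb - B d)) = b := by
  rw [map_smul, map_sub, map_sub, hsb, map_neg, hd, sub_neg_eq_add, neg_add_cancel_left,
    smul_smul, one_div, inv_mul_cancel₀ ht, one_smul]

theorem primal_sub_eq (hsb : H sb = -g) (w : E) :
    (1 / t) • H (sb - w) - (-(1 / t) • g) = -(1 / t) • H w := by
  rw [map_sub, hsb]
  module

end Field

variable {E : Type*} [NormedAddCommGroup E] [InnerProductSpace ℝ E] {H Hinv : E →ₗ[ℝ] E}

theorem sq_mul_inner_leftInverse_smul (hHinv : Hinv ∘ₗ H = LinearMap.id) {t : ℝ} (ht : t ≠ 0)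
    (w : E) : t ^ 2 * ⟪Hinv (-(1 / t) • H w), -(1 / t) • H w⟫ = ⟪H w, w⟫ := by
  have hw : Hinv (H w) = w := LinearMap.congr_fun hHinv w
  rw [map_smul, hw, real_inner_smul_left, real_inner_smul_right, real_inner_comm]
  field_simp

end DualGambit

theorem stmt6_general {E : Type*} [NormedAddCommGroup E] [InnerProductSpace ℝ E]
    [FiniteDimensional ℝ E] {m : ℕ}
    (H : E →ₗ[ℝ] E)
    (Hinv : E →ₗ[ℝ] E) (hHinv : Hinv ∘ₗ H = LinearMap.id)
    (A : E →ₗ[ℝ] EuclideanSpace ℝ (Fin m))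
    (b : EuclideanSpace ℝ (Fin m)) (t : ℝ) (ht : 0 < t)
    (sb g : E) (hsb : H sb = -g)
    (db : EuclideanSpace ℝ (Fin m))
    (hdb : A (H (LinearMap.adjoint A db)) = -(A g + t • b)) :
    A ((1 / t) • H (sb - LinearMap.adjoint A db)) = b ∧
    ⟪H ((sb - LinearMap.adjoint A db) - sb), (sb - LinearMap.adjoint A db) - sb⟫
      = ⟪A (H (LinearMap.adjoint A db)), db⟫ ∧
    t ^ 2 * ⟪Hinv ((1 / t) • H (sb - LinearMap.adjoint A db) - (-(1 / t) • g)),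
        (1 / t) • H (sb - LinearMap.adjoint A db) - (-(1 / t) • g)⟫
      = ⟪A (H (LinearMap.adjoint A db)), db⟫ := by
  refine ⟨DualGambit.map_primal_eq ht.ne' hsb hdb, ?_, ?_⟩
  · rw [sub_sub_cancel_left, map_neg, inner_neg_neg, LinearMap.adjoint_inner_right]
  · rw [DualGambit.primal_sub_eq hsb, DualGambit.sq_mul_inner_leftInverse_smul hHinv ht.ne',
      LinearMap.adjoint_inner_right]

/-- algebraic content of Lemma 4.1, the Dual Gambit Rule. Let `H` be a
positive definite self-adjoint operator with inverse `Hinv`, `A` surjective, `t > 0`, and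
`H s̄ = -g`.  Let `d̄` solve `(A H A*) d̄ = -(A g + t b)`, and set `ŝ = s̄ - A* d̄`,
`x̄ = -(1/t) g`, `x̂ = (1/t) H ŝ`, `λ̄² = ⟨(A H A*) d̄, d̄⟩`.  Then (i) `A x̂ = b`;
(ii) `⟨H(ŝ - s̄), ŝ - s̄⟩ = λ̄²`; (iii) `t² ⟨H⁻¹(x̂ - x̄), x̂ - x̄⟩ = λ̄²`. -/
theorem stmt6 {E : Type*} [NormedAddCommGroup E] [InnerProductSpace ℝ E]
    [FiniteDimensional ℝ E] {m : ℕ}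
    (H : E →ₗ[ℝ] E) (hsym : ∀ u v : E, ⟪H u, v⟫ = ⟪u, H v⟫)
    (hpos : ∀ u : E, u ≠ 0 → 0 < ⟪H u, u⟫)
    (Hinv : E →ₗ[ℝ] E) (hHinv : Hinv ∘ₗ H = LinearMap.id) (hHinv' : H ∘ₗ Hinv = LinearMap.id)
    (A : E →ₗ[ℝ] EuclideanSpace ℝ (Fin m)) (hA : Function.Surjective A)
    (b : EuclideanSpace ℝ (Fin m)) (t : ℝ) (ht : 0 < t)
    (sb g : E) (hsb : H sb = -g)
    (db : EuclideanSpace ℝ (Fin m))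
    (hdb : A (H (LinearMap.adjoint A db)) = -(A g + t • b)) :
    A ((1 / t) • H (sb - LinearMap.adjoint A db)) = b ∧
    ⟪H ((sb - LinearMap.adjoint A db) - sb), (sb - LinearMap.adjoint A db) - sb⟫
      = ⟪A (H (LinearMap.adjoint A db)), db⟫ ∧
    t ^ 2 * ⟪Hinv ((1 / t) • H (sb - LinearMap.adjoint A db) - (-(1 / t) • g)),
        (1 / t) • H (sb - LinearMap.adjoint A db) - (-(1 / t) • g)⟫
      = ⟪A (H (LinearMap.adjoint A db)), db⟫ :=
  stmt6_general H Hinv hHinv A b t ht sb g hsb db hdb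
end

section
/- Let E be a finite-dimensional real inner product space, ν > 0, κ ∈ ℝ, D ⊆ E an open set, and D* ⊆ E an open set closed under multiplication by positive scalars. Let W : E → E be a positive definite self-adjoint linear operator with W⁻¹(D*) ⊆ D, and let F : D → ℝ, F* : D* → ℝ satisfy: (a) F(W⁻¹u) = F*(u) + 2κ + ν for all u ∈ D*; (b) F*(τu) = F*(u) − ν·ln τ for all τ > 0 and u ∈ D*. Let x ∈ D and s := Wx ∈ D* with ⟨s,x⟩ > 0, and let Δx, Δs ∈ E satisfy Δs + WΔx = −s and ⟨Δs, Δx⟩ = 0. Then for every α ∈ (0,1) such that s + αΔs ∈ D* and s − (α/(1−α))Δs ∈ D*, one has x + αΔx ∈ D, ⟨s + αΔs, x + αΔx⟩ = (1−α)⟨s,x⟩ > 0, and Ω(x + αΔx, s + αΔs) − Ω(x, s) = F*(s + αΔs) + F*( s − (α/(1−α))Δs ) − 2F*(s), where Ω(x', s') := ν·ln⟨s', x'⟩ + F(x') + F*(s') + ν − ν·ln ν. -/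
open scoped RealInnerProductSpace

/-- representation (7.9) of the paper, for self-scaled cones. Let `W` be a
positive definite self-adjoint operator with inverse `Winv` mapping `D*` into `D`, where
`F(W⁻¹u) = F*(u) + 2κ + ν` on `D*` and `F*` is logarithmically `ν`-homogeneous on the open
set `D*` (closed under positive scalings).  If `s = Wx ∈ D*`, `⟨s,x⟩ > 0`, and `(Δx, Δs)`
satisfy `Δs + WΔx = -s` and `⟨Δs, Δx⟩ = 0`, then for every `α ∈ (0,1)` with
`s + αΔs ∈ D*` and `s - (α/(1-α))Δs ∈ D*` one has `x + αΔx ∈ D`,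
`⟨s + αΔs, x + αΔx⟩ = (1-α)⟨s,x⟩ > 0`, and
`Ω(x+αΔx, s+αΔs) - Ω(x,s) = F*(s+αΔs) + F*(s - (α/(1-α))Δs) - 2F*(s)`, where
`Ω(x', s') = ν ln⟨s',x'⟩ + F(x') + F*(s') + ν - ν ln ν`. -/
theorem stmt11 {E : Type*} [NormedAddCommGroup E] [InnerProductSpace ℝ E]
    [FiniteDimensional ℝ E]
    (ν κ : ℝ) (hν : 0 < ν)
    (D Dstar : Set E) (hD : IsOpen D) (hDs : IsOpen Dstar)
    (hDscone : ∀ u ∈ Dstar, ∀ τ : ℝ, 0 < τ → τ • u ∈ Dstar)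
    (W Winv : E →ₗ[ℝ] E)
    (hsym : ∀ u v : E, ⟪W u, v⟫ = ⟪u, W v⟫)
    (hpos : ∀ u : E, u ≠ 0 → 0 < ⟪W u, u⟫)
    (hWinv : Winv ∘ₗ W = LinearMap.id) (hWinv' : W ∘ₗ Winv = LinearMap.id)
    (hWinvD : ∀ u ∈ Dstar, Winv u ∈ D)
    (F Fstar : E → ℝ)
    (ha : ∀ u ∈ Dstar, F (Winv u) = Fstar u + 2 * κ + ν)
    (hb : ∀ u ∈ Dstar, ∀ τ : ℝ, 0 < τ → Fstar (τ • u) = Fstar u - ν * Real.log τ)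
    (x : E) (hx : x ∈ D) (hs : W x ∈ Dstar) (hsx : 0 < ⟪W x, x⟫)
    (dx ds : E) (hdir : ds + W dx = -(W x)) (horth : ⟪ds, dx⟫ = 0)
    (α : ℝ) (hα : α ∈ Set.Ioo (0 : ℝ) 1)
    (h1 : W x + α • ds ∈ Dstar) (h2 : W x - (α / (1 - α)) • ds ∈ Dstar) :
    x + α • dx ∈ D ∧
    ⟪W x + α • ds, x + α • dx⟫ = (1 - α) * ⟪W x, x⟫ ∧
    0 < ⟪W x + α • ds, x + α • dx⟫ ∧
    (ν * Real.log ⟪W x + α • ds, x + α • dx⟫ + F (x + α • dx) + Fstar (W x + α • ds)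
        + ν - ν * Real.log ν)
      - (ν * Real.log ⟪W x, x⟫ + F x + Fstar (W x) + ν - ν * Real.log ν)
      = Fstar (W x + α • ds) + Fstar (W x - (α / (1 - α)) • ds) - 2 * Fstar (W x) := by
  obtain ⟨hα0, hα1⟩ := hα
  have h1α : (0:ℝ) < 1 - α := by linarith
  have hWdx : W dx = -(W x) - ds := by
    have h := hdir
    rwa [add_comm, ← eq_sub_iff_add_eq] at h
  have hinv : ∀ v : E, Winv (W v) = v := fun v => by
    have := LinearMap.congr_fun hWinv v
    simpa using this
  have key : W (x + α • dx) = (1 - α) • (W x - (α / (1 - α)) • ds) := by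
    have hc : (1 - α) • ((α / (1 - α)) • ds) = α • ds := by
      rw [smul_smul]
      congr 1
      field_simp
    rw [map_add, map_smul, hWdx]
    conv_rhs => rw [smul_sub, hc]
    module
  have hmem2 : (1 - α) • (W x - (α / (1 - α)) • ds) ∈ Dstar := hDscone _ h2 _ h1α
  have hxD : x + α • dx ∈ D := by
    have := hWinvD _ hmem2
    rwa [← key, hinv] at this
  have hIP : ⟪W x + α • ds, x + α • dx⟫ = (1 - α) * ⟪W x, x⟫ := by
    have e1 : ⟪W x, dx⟫ = -⟪W x, x⟫ - ⟪ds, x⟫ := by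
      rw [hsym x dx, hWdx, inner_sub_right, inner_neg_right,
        real_inner_comm x (W x), real_inner_comm x ds]
    simp only [inner_add_left, inner_add_right, real_inner_smul_left,
      real_inner_smul_right, e1, horth, real_inner_comm ds x]
    ring
  have hIPpos : 0 < ⟪W x + α • ds, x + α • dx⟫ := by
    rw [hIP]; positivity
  refine ⟨hxD, hIP, hIPpos, ?_⟩
  have hFx : F x = Fstar (W x) + 2 * κ + ν := by
    have := ha (W x) hs
    rwa [hinv x] at this
  have hFx2 : F (x + α • dx) = Fstar (W x - (α / (1 - α)) • ds) - ν * Real.log (1 - α)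
      + 2 * κ + ν := by
    have h := ha _ hmem2
    rw [← key, hinv] at h
    rw [h, key, hb _ h2 _ h1α]
  have hlog : Real.log ((1 - α) * ⟪W x, x⟫) = Real.log (1 - α) + Real.log ⟪W x, x⟫ :=
    Real.log_mul (ne_of_gt h1α) (ne_of_gt hsx)
  rw [hIP, hlog, hFx, hFx2]
  ring
end

section
/- Let S be a real symmetric positive definite n×n matrix, L an invertible n×n matrix with S = L Lᵀ, ΔS a real symmetric n×n matrix, and B := L⁻¹ ΔS L⁻ᵀ. Then for every α ∈ (0,1) such that S + αΔS and S − (α/(1−α))ΔS are positive definite, the matrix Iₙ − (α²/(1−α))(B + B²) is positive definite and −ln det(S + αΔS) − ln det( S − (α/(1−α))ΔS ) + 2·ln det S = −ln det( Iₙ − (α²/(1−α))(B + B²) ). -/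
/-!
Put `P = 1 + αB` and `Q = 1 - (α/(1-α))B`. Congruence by `L` turns `S + αΔS` and
`S - (α/(1-α))ΔS` into `L P Lᵀ` and `L Q Lᵀ`, so `P` and `Q` are positive definite and each
determinant is `det S` times `det P`, resp. `det Q`. The scalars are chosen so that
`P Q = 1 - (α²/(1-α))(B + B²)`; as polynomials in `B`, `P` and `Q` commute, so their product is
positive definite, and the identity is the additivity of `log det`.
-/

open Matrix
open scoped MatrixOrder ComplexOrder

theorem Matrix.PosDef.mul_of_commute {𝕜 n : Type*} [RCLike 𝕜] [Fintype n] [DecidableEq n]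
    {P Q : Matrix n n 𝕜} (hP : P.PosDef) (hQ : Q.PosDef) (h : Commute P Q) : (P * Q).PosDef :=
  ((hP.isStrictlyPositive.commute_iff hQ.isStrictlyPositive).mp h).posDef

section Algebra

variable {K A : Type*} [Field K] [Ring A] [Algebra K A]

theorem commute_one_add_smul_one_sub_smul (b : A) (s t : K) : Commute (1 + s • b) (1 - t • b) :=
  (Commute.one_left _).add_left
    ((Commute.one_right _).sub_right (((Commute.refl b).smul_left s).smul_right t))

theorem one_add_smul_mul_one_sub_div_smul (b : A) {α : K} (hα : α ≠ 1) :
    (1 + α • b) * (1 - (α / (1 - α)) • b) = 1 - (α ^ 2 / (1 - α)) • (b + b * b) := by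
  have h1α : 1 - α ≠ 0 := sub_ne_zero.2 hα.symm
  have hlin : α - α / (1 - α) = -(α ^ 2 / (1 - α)) := by field_simp; ring
  have hquad : α * (α / (1 - α)) = α ^ 2 / (1 - α) := by field_simp
  simp only [add_mul, mul_sub, one_mul, mul_one, smul_mul_smul_comm, smul_add]
  rw [← hquad]
  linear_combination (norm := module) hlin • b

end Algebra

namespace Matrix

variable {n : Type*} [Fintype n] [DecidableEq n]

theorem posDef_mul_mul_transpose_iff {L A : Matrix n n ℝ} (hL : IsUnit L.det) :
    (L * A * Lᵀ).PosDef ↔ A.PosDef := by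
  simpa only [star_eq_conjTranspose, conjTranspose_eq_transpose_of_trivial] using
    ((isUnit_iff_isUnit_det L).2 hL).posDef_star_right_conjugate_iff (x := A)

theorem add_smul_eq_mul_one_add_smul_mul_transpose {R : Type*} [CommRing R]
    {L : Matrix n n R} (hL : IsUnit L.det) (M : Matrix n n R) (t : R) :
    L * Lᵀ + t • M = L * (1 + t • (L⁻¹ * M * L⁻¹ᵀ)) * Lᵀ := by
  have hLT : L⁻¹ᵀ * Lᵀ = 1 := by rw [← transpose_mul, mul_nonsing_inv L hL, transpose_one]
  rw [Matrix.mul_add, Matrix.add_mul, mul_one, Matrix.mul_smul, Matrix.smul_mul,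
    ← Matrix.mul_assoc, ← Matrix.mul_assoc, mul_nonsing_inv L hL, one_mul, Matrix.mul_assoc, hLT,
    mul_one]

theorem log_det_mul_mul_transpose {L A : Matrix n n ℝ} (hL : IsUnit L.det) (hA : A.det ≠ 0) :
    Real.log (L * A * Lᵀ).det = Real.log (L * Lᵀ).det + Real.log A.det := by
  have hLLT : (L * Lᵀ).det ≠ 0 := by simpa [det_mul] using hL.ne_zero
  rw [← Real.log_mul hLLT hA, det_mul, det_mul, det_mul, det_transpose]
  ring_nf

end Matrix

theorem stmt12_general {n : ℕ}
    (S : Matrix (Fin n) (Fin n) ℝ)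
    (L : Matrix (Fin n) (Fin n) ℝ) (hL : IsUnit L.det) (hSL : S = L * Lᵀ)
    (ΔS : Matrix (Fin n) (Fin n) ℝ)
    (B : Matrix (Fin n) (Fin n) ℝ) (hB : B = L⁻¹ * ΔS * (L⁻¹)ᵀ)
    (α : ℝ) (hα : α ∈ Set.Ioo (0 : ℝ) 1)
    (h1 : (S + α • ΔS).PosDef) (h2 : (S - (α / (1 - α)) • ΔS).PosDef) :
    ((1 : Matrix (Fin n) (Fin n) ℝ) - (α ^ 2 / (1 - α)) • (B + B * B)).PosDef ∧
    -Real.log (S + α • ΔS).det - Real.log (S - (α / (1 - α)) • ΔS).det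
        + 2 * Real.log S.det
      = -Real.log ((1 : Matrix (Fin n) (Fin n) ℝ)
          - (α ^ 2 / (1 - α)) • (B + B * B)).det := by
  have hSP : S + α • ΔS = L * (1 + α • B) * Lᵀ := by
    rw [hSL, hB, add_smul_eq_mul_one_add_smul_mul_transpose hL]
  have hSQ : S - (α / (1 - α)) • ΔS = L * (1 - (α / (1 - α)) • B) * Lᵀ := by
    rw [sub_eq_add_neg, ← neg_smul, hSL, hB,
      add_smul_eq_mul_one_add_smul_mul_transpose hL, neg_smul, ← sub_eq_add_neg]
  have hP : (1 + α • B).PosDef := (posDef_mul_mul_transpose_iff hL).1 (hSP ▸ h1)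
  have hQ : (1 - (α / (1 - α)) • B).PosDef := (posDef_mul_mul_transpose_iff hL).1 (hSQ ▸ h2)
  rw [← one_add_smul_mul_one_sub_div_smul B hα.2.ne]
  refine ⟨hP.mul_of_commute hQ (commute_one_add_smul_one_sub_smul B _ _), ?_⟩
  rw [hSP, hSQ, log_det_mul_mul_transpose hL hP.det_pos.ne',
    log_det_mul_mul_transpose hL hQ.det_pos.ne', ← hSL, det_mul,
    Real.log_mul hP.det_pos.ne' hQ.det_pos.ne']
  ring

/-- representation (8.8)–(8.9) of the paper. Let `S = L Lᵀ` be symmetric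
positive definite with `L` invertible, `ΔS` symmetric, and `B = L⁻¹ ΔS L⁻ᵀ`.  Then for every
`α ∈ (0,1)` with `S + αΔS` and `S - (α/(1-α))ΔS` positive definite, the matrix
`I - (α²/(1-α))(B + B²)` is positive definite and
`-ln det(S + αΔS) - ln det(S - (α/(1-α))ΔS) + 2 ln det S = -ln det(I - (α²/(1-α))(B + B²))`. -/
theorem stmt12 {n : ℕ}
    (S : Matrix (Fin n) (Fin n) ℝ) (hS : S.PosDef)
    (L : Matrix (Fin n) (Fin n) ℝ) (hL : IsUnit L.det) (hSL : S = L * Lᵀ)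
    (ΔS : Matrix (Fin n) (Fin n) ℝ) (hΔS : ΔS.IsSymm)
    (B : Matrix (Fin n) (Fin n) ℝ) (hB : B = L⁻¹ * ΔS * (L⁻¹)ᵀ)
    (α : ℝ) (hα : α ∈ Set.Ioo (0 : ℝ) 1)
    (h1 : (S + α • ΔS).PosDef) (h2 : (S - (α / (1 - α)) • ΔS).PosDef) :
    ((1 : Matrix (Fin n) (Fin n) ℝ) - (α ^ 2 / (1 - α)) • (B + B * B)).PosDef ∧
    -Real.log (S + α • ΔS).det - Real.log (S - (α / (1 - α)) • ΔS).det
        + 2 * Real.log S.det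
      = -Real.log ((1 : Matrix (Fin n) (Fin n) ℝ)
          - (α ^ 2 / (1 - α)) • (B + B * B)).det :=
  stmt12_general S L hL hSL ΔS B hB α hα h1 h2
end

section
/- Let s, x ∈ ℝⁿ have all coordinates positive, and let Δs, Δx ∈ ℝⁿ satisfy Δs⁽ⁱ⁾/s⁽ⁱ⁾ + Δx⁽ⁱ⁾/x⁽ⁱ⁾ = −1 for each i = 1,…,n. Then for every α ∈ (0,1) such that s⁽ⁱ⁾ + αΔs⁽ⁱ⁾ > 0 and s⁽ⁱ⁾ − (α/(1−α))Δs⁽ⁱ⁾ > 0 for all i, each factor 1 + (α²/(1−α))·(Δs⁽ⁱ⁾Δx⁽ⁱ⁾)/(s⁽ⁱ⁾x⁽ⁱ⁾) is positive and −Σᵢ [ ln(s⁽ⁱ⁾ + αΔs⁽ⁱ⁾) + ln( s⁽ⁱ⁾ − (α/(1−α))Δs⁽ⁱ⁾ ) − 2 ln s⁽ⁱ⁾ ] = −Σᵢ ln( 1 + (α²/(1−α))·(Δs⁽ⁱ⁾Δx⁽ⁱ⁾)/(s⁽ⁱ⁾x⁽ⁱ⁾) ). -/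
/-- short representation (8.14) of the paper, positive orthant. If
`s, x > 0` componentwise and `Δs⁽ⁱ⁾/s⁽ⁱ⁾ + Δx⁽ⁱ⁾/x⁽ⁱ⁾ = -1` for each `i`, then for every
`α ∈ (0,1)` keeping `s + αΔs` and `s - (α/(1-α))Δs` positive, each factor
`1 + (α²/(1-α)) Δs⁽ⁱ⁾Δx⁽ⁱ⁾/(s⁽ⁱ⁾x⁽ⁱ⁾)` is positive and
`-Σᵢ [ln(s⁽ⁱ⁾+αΔs⁽ⁱ⁾) + ln(s⁽ⁱ⁾-(α/(1-α))Δs⁽ⁱ⁾) - 2 ln s⁽ⁱ⁾]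
  = -Σᵢ ln(1 + (α²/(1-α)) Δs⁽ⁱ⁾Δx⁽ⁱ⁾/(s⁽ⁱ⁾x⁽ⁱ⁾))`. -/
theorem stmt13 {n : ℕ} (s x Δs Δx : Fin n → ℝ)
    (hs : ∀ i, 0 < s i) (hx : ∀ i, 0 < x i)
    (hrel : ∀ i, Δs i / s i + Δx i / x i = -1)
    (α : ℝ) (hα : α ∈ Set.Ioo (0 : ℝ) 1)
    (h1 : ∀ i, 0 < s i + α * Δs i) (h2 : ∀ i, 0 < s i - (α / (1 - α)) * Δs i) :
    (∀ i, 0 < 1 + (α ^ 2 / (1 - α)) * (Δs i * Δx i) / (s i * x i)) ∧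
    -(∑ i, (Real.log (s i + α * Δs i) + Real.log (s i - (α / (1 - α)) * Δs i)
          - 2 * Real.log (s i)))
      = -(∑ i, Real.log (1 + (α ^ 2 / (1 - α)) * (Δs i * Δx i) / (s i * x i))) := by
  obtain ⟨hα0, hα1⟩ := hα
  have hα1' : (0:ℝ) < 1 - α := by linarith
  have key : ∀ i, 1 + (α ^ 2 / (1 - α)) * (Δs i * Δx i) / (s i * x i)
      = (s i + α * Δs i) * (s i - (α / (1 - α)) * Δs i) / (s i) ^ 2 := by
    intro i
    have hsi := (hs i).ne'
    have hxi := (hx i).ne'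
    have hr := hrel i
    have hΔx : Δx i = x i * (-1 - Δs i / s i) := by
      field_simp at hr ⊢
      nlinarith [hr]
    rw [hΔx]
    field_simp
    ring
  constructor
  · intro i
    rw [key i]
    exact div_pos (mul_pos (h1 i) (h2 i)) (pow_pos (hs i) 2)
  · congr 1
    apply Finset.sum_congr rfl
    intro i _
    rw [key i, Real.log_div (mul_pos (h1 i) (h2 i)).ne' (pow_pos (hs i) 2).ne',
      Real.log_mul (h1 i).ne' (h2 i).ne', Real.log_pow]
    push_cast
    ring
end

section
/- Let τ ∈ ℝ, u ∈ ℝⁿ with ω := τ² − ‖u‖² > 0, and Δτ ∈ ℝ, Δu ∈ ℝⁿ. Define Δ₁ := τΔτ − ⟨u, Δu⟩, Δ₂ := (Δτ)² − ‖Δu‖², δᵢ := Δᵢ/ω for i = 1,2, a₁ := δ₁ + 2δ₁² − δ₂, and a₂ := δ₂² + 2δ₁δ₂ + δ₂. Then for every α ∈ (0,1) such that ω + 2αΔ₁ + α²Δ₂ > 0 and ω − (2α/(1−α))Δ₁ + (α²/(1−α)²)Δ₂ > 0, one has 1 − (2α²/(1−α))a₁ + (α²/(1−α))²a₂ > 0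 and −ln( ω + 2αΔ₁ + α²Δ₂ ) − ln( ω − (2α/(1−α))Δ₁ + (α²/(1−α)²)Δ₂ ) + 2·ln ω = −ln( 1 − (2α²/(1−α))a₁ + (α²/(1−α))²a₂ ). -/
open scoped RealInnerProductSpace

/-- short representation (8.16)–(8.17) of the paper, Lorentz cone. With
`ω = τ² - ‖u‖² > 0`, `Δ₁ = τΔτ - ⟨u,Δu⟩`, `Δ₂ = Δτ² - ‖Δu‖²`, `δᵢ = Δᵢ/ω`,
`a₁ = δ₁ + 2δ₁² - δ₂`, `a₂ = δ₂² + 2δ₁δ₂ + δ₂`, for every `α ∈ (0,1)` keeping both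
quadratic expressions positive one has `1 - (2α²/(1-α))a₁ + (α²/(1-α))²a₂ > 0` and
`-ln(ω + 2αΔ₁ + α²Δ₂) - ln(ω - (2α/(1-α))Δ₁ + (α²/(1-α)²)Δ₂) + 2 ln ω
  = -ln(1 - (2α²/(1-α))a₁ + (α²/(1-α))²a₂)`. -/
theorem stmt14 {n : ℕ} (τ : ℝ) (u : EuclideanSpace ℝ (Fin n))
    (Δτ : ℝ) (Δu : EuclideanSpace ℝ (Fin n))
    (ω : ℝ) (hω : ω = τ ^ 2 - ‖u‖ ^ 2) (hωpos : 0 < ω)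
    (Δ₁ Δ₂ δ₁ δ₂ a₁ a₂ : ℝ)
    (hΔ₁ : Δ₁ = τ * Δτ - ⟪u, Δu⟫) (hΔ₂ : Δ₂ = Δτ ^ 2 - ‖Δu‖ ^ 2)
    (hδ₁ : δ₁ = Δ₁ / ω) (hδ₂ : δ₂ = Δ₂ / ω)
    (ha₁ : a₁ = δ₁ + 2 * δ₁ ^ 2 - δ₂) (ha₂ : a₂ = δ₂ ^ 2 + 2 * δ₁ * δ₂ + δ₂)
    (α : ℝ) (hα : α ∈ Set.Ioo (0 : ℝ) 1)
    (h1 : 0 < ω + 2 * α * Δ₁ + α ^ 2 * Δ₂)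
    (h2 : 0 < ω - (2 * α / (1 - α)) * Δ₁ + (α ^ 2 / (1 - α) ^ 2) * Δ₂) :
    0 < 1 - (2 * α ^ 2 / (1 - α)) * a₁ + (α ^ 2 / (1 - α)) ^ 2 * a₂ ∧
    -Real.log (ω + 2 * α * Δ₁ + α ^ 2 * Δ₂)
        - Real.log (ω - (2 * α / (1 - α)) * Δ₁ + (α ^ 2 / (1 - α) ^ 2) * Δ₂)
        + 2 * Real.log ω
      = -Real.log (1 - (2 * α ^ 2 / (1 - α)) * a₁ + (α ^ 2 / (1 - α)) ^ 2 * a₂) := by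
  obtain ⟨hα0, hα1⟩ := hα
  have h1a : (1:ℝ) - α ≠ 0 := by linarith
  have hωne : ω ≠ 0 := ne_of_gt hωpos
  have hω2 : (0:ℝ) < ω ^ 2 := by positivity
  have key : (ω + 2 * α * Δ₁ + α ^ 2 * Δ₂) *
      (ω - (2 * α / (1 - α)) * Δ₁ + (α ^ 2 / (1 - α) ^ 2) * Δ₂)
      = ω ^ 2 * (1 - (2 * α ^ 2 / (1 - α)) * a₁ + (α ^ 2 / (1 - α)) ^ 2 * a₂) := by
    subst ha₁ ha₂ hδ₁ hδ₂
    field_simp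
    ring
  have hmul := mul_pos h1 h2
  rw [key] at hmul
  have hC : 0 < 1 - (2 * α ^ 2 / (1 - α)) * a₁ + (α ^ 2 / (1 - α)) ^ 2 * a₂ := by
    have heq : 1 - (2 * α ^ 2 / (1 - α)) * a₁ + (α ^ 2 / (1 - α)) ^ 2 * a₂
        = ω ^ 2 * (1 - (2 * α ^ 2 / (1 - α)) * a₁ + (α ^ 2 / (1 - α)) ^ 2 * a₂) / ω ^ 2 := by
      field_simp
    rw [heq]
    exact div_pos hmul hω2
  refine ⟨hC, ?_⟩
  have hlog1 := Real.log_mul (ne_of_gt h1) (ne_of_gt h2)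
  have hlog2 := Real.log_mul (ne_of_gt hω2) (ne_of_gt hC)
  rw [key] at hlog1
  rw [hlog2] at hlog1
  have hlogω : Real.log (ω ^ 2) = 2 * Real.log ω := by
    rw [Real.log_pow]; push_cast; ring
  rw [hlogω] at hlog1
  linarith
end

section
/- Let C be a real symmetric positive definite n×n matrix and A a real m×n matrix of rank m (m ≤ n). Then G := A C⁻¹ Aᵀ is positive definite, and for every y ∈ ℝᵐ: det( C − Aᵀ D(y) A ) = det C · det G · det( G⁻¹ − D(y) ), where D(y) denotes the m×m diagonal matrix with the entries of y on the diagonal. Moreover, C − AᵀD(y)A is positive definite if and only if G⁻¹ − D(y) is positive definite. -/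
/-!
Write `G = A C⁻¹ Aᴴ` and `P = C⁻¹ Aᴴ G⁻¹`, the `C`-orthogonal right inverse of `A`.
Full row rank of `A` makes `G` positive definite. The determinant identity is the
Weinstein–Aronszajn identity `det (1 - C⁻¹ Aᴴ D A) = det (1 - G D)`. For definiteness,
`Pᴴ (C - Aᴴ D A) P = G⁻¹ - D` with `P` injective, while conversely
`C - Aᴴ D A = (1 - P A)ᴴ C (1 - P A) + Aᴴ (G⁻¹ - D) A`, whose two summands cannot vanish
simultaneously on a nonzero vector.
-/

open Matrix

namespace Matrix

variable {l m n K : Type*} [Fintype l] [Fintype m] [Fintype n]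

theorem vecMul_injective_of_rank_eq_card [Field K] {A : Matrix m n K}
    (hA : A.rank = Fintype.card m) : Function.Injective A.vecMul := by
  rw [vecMul_injective_iff, linearIndependent_iff_card_eq_finrank_span, ← hA,
    rank_eq_finrank_span_row, Set.finrank]

theorem det_sub_mul_mul_eq [CommRing K] [DecidableEq m] [DecidableEq n] {C : Matrix n n K}
    (A : Matrix m n K) (B : Matrix n m K) (D : Matrix m m K) (hC : IsUnit C.det)
    (hG : IsUnit (A * C⁻¹ * B).det) :
    (C - B * D * A).det = C.det * (A * C⁻¹ * B).det * ((A * C⁻¹ * B)⁻¹ - D).det := by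
  have hGD : 1 + A * C⁻¹ * (-(B * D)) = A * C⁻¹ * B * ((A * C⁻¹ * B)⁻¹ - D) := by
    rw [Matrix.mul_sub, mul_nonsing_inv _ hG, Matrix.mul_neg, sub_eq_add_neg,
      Matrix.mul_assoc _ B]
  rw [sub_eq_add_neg, ← Matrix.neg_mul, det_add_mul _ _ hC, hGD, det_mul, mul_assoc]

theorem star_dotProduct_conjTranspose_mul_mul_mulVec [CommRing K] [StarRing K]
    (M : Matrix l n K) (Z : Matrix l l K) (x : n → K) :
    star x ⬝ᵥ (Mᴴ * Z * M) *ᵥ x = star (M *ᵥ x) ⬝ᵥ Z *ᵥ (M *ᵥ x) := by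
  simp only [star_mulVec, dotProduct_mulVec, vecMul_vecMul]

variable [Field K] [PartialOrder K] [StarRing K] [StarOrderedRing K]

theorem PosDef.conjTranspose_mul_mul_add_conjTranspose_mul_mul {X : Matrix l l K}
    {Y : Matrix m m K} {B : Matrix l n K} {A : Matrix m n K} (hX : X.PosDef) (hY : Y.PosDef)
    (hBA : ∀ x, B *ᵥ x = 0 → A *ᵥ x = 0 → x = 0) : (Bᴴ * X * B + Aᴴ * Y * A).PosDef := by
  refine .of_dotProduct_mulVec_pos ((isHermitian_conjTranspose_mul_mul B hX.1).add
    (isHermitian_conjTranspose_mul_mul A hY.1)) fun x hx => ?_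
  rw [add_mulVec, dotProduct_add, star_dotProduct_conjTranspose_mul_mul_mulVec,
    star_dotProduct_conjTranspose_mul_mul_mulVec]
  by_cases hAx : A *ᵥ x = 0
  · have hBx : B *ᵥ x ≠ 0 := fun hBx => hx (hBA x hBx hAx)
    simpa [hAx] using hX.dotProduct_mulVec_pos hBx
  · exact add_pos_of_nonneg_of_pos (hX.posSemidef.dotProduct_mulVec_nonneg _)
      (hY.dotProduct_mulVec_pos hAx)

theorem posDef_sub_conjTranspose_mul_mul_iff_of_mul_eq [DecidableEq m] [DecidableEq n]
    {C : Matrix n n K} {A : Matrix m n K} {P : Matrix n m K} {Y : Matrix m m K} (D : Matrix m m K)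
    (hC : C.PosDef) (hAP : A * P = 1) (hCP : C * P = Aᴴ * Y) :
    (C - Aᴴ * D * A).PosDef ↔ (Y - D).PosDef := by
  have hPCP : Pᴴ * C * P = Y := by
    rw [Matrix.mul_assoc, hCP, ← Matrix.mul_assoc, ← conjTranspose_mul, hAP,
      conjTranspose_one, Matrix.one_mul]
  have hPC : Pᴴ * C = Y * A := by
    rw [← hC.1.eq, ← conjTranspose_mul, hCP, conjTranspose_mul, conjTranspose_conjTranspose,
      ← hPCP, (isHermitian_conjTranspose_mul_mul P hC.1).eq]
  have hcompress : Pᴴ * (C - Aᴴ * D * A) * P = Y - D := by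
    rw [Matrix.mul_sub, Matrix.sub_mul, hPCP, ← Matrix.mul_assoc, ← Matrix.mul_assoc,
      ← conjTranspose_mul, hAP, conjTranspose_one, Matrix.one_mul, Matrix.mul_assoc, hAP,
      Matrix.mul_one]
  have hsplit : (1 - P * A)ᴴ * C * (1 - P * A) + Aᴴ * (Y - D) * A = C - Aᴴ * D * A := by
    have hCPA : C * (P * A) = Aᴴ * (Y * A) := by
      rw [← Matrix.mul_assoc, hCP, Matrix.mul_assoc]
    have hAPA : A * (P * A) = A := by rw [← Matrix.mul_assoc, hAP, Matrix.one_mul]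
    simp only [conjTranspose_sub, conjTranspose_one, conjTranspose_mul, Matrix.sub_mul,
      Matrix.mul_sub, Matrix.one_mul, Matrix.mul_one, Matrix.mul_assoc, hCPA, hPC, hAPA]
    abel
  constructor
  · intro h
    rw [← hcompress]
    exact h.conjTranspose_mul_mul_same (Function.LeftInverse.injective (g := A.mulVec)
      fun v => by rw [mulVec_mulVec, hAP, one_mulVec])
  · intro h
    rw [← hsplit]
    refine hC.conjTranspose_mul_mul_add_conjTranspose_mul_mul h fun x hBx hAx => ?_
    simpa [sub_mulVec, ← mulVec_mulVec, hAx] using hBx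

theorem posDef_sub_conjTranspose_mul_mul_iff [DecidableEq m] [DecidableEq n]
    {C : Matrix n n K} {A : Matrix m n K} (D : Matrix m m K) (hC : C.PosDef)
    (hA : Function.Injective A.vecMul) :
    (C - Aᴴ * D * A).PosDef ↔ ((A * C⁻¹ * Aᴴ)⁻¹ - D).PosDef := by
  have hCdet : IsUnit C.det := (isUnit_iff_isUnit_det C).mp hC.isUnit
  have hGdet : IsUnit (A * C⁻¹ * Aᴴ).det :=
    (isUnit_iff_isUnit_det _).mp (hC.inv.mul_mul_conjTranspose_same hA).isUnit
  refine posDef_sub_conjTranspose_mul_mul_iff_of_mul_eq (P := C⁻¹ * Aᴴ * (A * C⁻¹ * Aᴴ)⁻¹)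
    D hC ?_ ?_
  · rw [← Matrix.mul_assoc, ← Matrix.mul_assoc, mul_nonsing_inv _ hGdet]
  · rw [← Matrix.mul_assoc, ← Matrix.mul_assoc, mul_nonsing_inv _ hCdet, Matrix.one_mul]

end Matrix

theorem stmt15_general {m n : ℕ}
    (C : Matrix (Fin n) (Fin n) ℝ) (hC : C.PosDef)
    (A : Matrix (Fin m) (Fin n) ℝ) (hA : A.rank = m) :
    (A * C⁻¹ * Aᵀ).PosDef ∧
    ∀ y : Fin m → ℝ,
      ((C - Aᵀ * Matrix.diagonal y * A).det
          = C.det * (A * C⁻¹ * Aᵀ).det * ((A * C⁻¹ * Aᵀ)⁻¹ - Matrix.diagonal y).det) ∧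
      ((C - Aᵀ * Matrix.diagonal y * A).PosDef ↔
        ((A * C⁻¹ * Aᵀ)⁻¹ - Matrix.diagonal y).PosDef) := by
  have hrows : Function.Injective A.vecMul :=
    vecMul_injective_of_rank_eq_card (by rw [hA, Fintype.card_fin])
  have hG : (A * C⁻¹ * Aᴴ).PosDef := hC.inv.mul_mul_conjTranspose_same hrows
  rw [← conjTranspose_eq_transpose_of_trivial]
  refine ⟨hG, fun y => ⟨?_, posDef_sub_conjTranspose_mul_mul_iff _ hC hrows⟩⟩
  exact det_sub_mul_mul_eq _ _ _ ((isUnit_iff_isUnit_det C).mp hC.isUnit)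
    ((isUnit_iff_isUnit_det _).mp hG.isUnit)

/-- Lemma 8.1 of the paper, determinant representation. Let `C` be symmetric
positive definite `n×n` and `A` an `m×n` matrix of full row rank `m ≤ n`.  Then
`G = A C⁻¹ Aᵀ` is positive definite and for every `y ∈ ℝᵐ`:
`det(C - Aᵀ D(y) A) = det C · det G · det(G⁻¹ - D(y))`, and `C - Aᵀ D(y) A` is positive
definite iff `G⁻¹ - D(y)` is positive definite. -/
theorem stmt15 {m n : ℕ} (hmn : m ≤ n)
    (C : Matrix (Fin n) (Fin n) ℝ) (hC : C.PosDef)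
    (A : Matrix (Fin m) (Fin n) ℝ) (hA : A.rank = m) :
    (A * C⁻¹ * Aᵀ).PosDef ∧
    ∀ y : Fin m → ℝ,
      ((C - Aᵀ * Matrix.diagonal y * A).det
          = C.det * (A * C⁻¹ * Aᵀ).det * ((A * C⁻¹ * Aᵀ)⁻¹ - Matrix.diagonal y).det) ∧
      ((C - Aᵀ * Matrix.diagonal y * A).PosDef ↔
        ((A * C⁻¹ * Aᵀ)⁻¹ - Matrix.diagonal y).PosDef) :=
  stmt15_general C hC A hA
end

section
/- Let m ≥ 1, let Y be a real symmetric m×m matrix with −I_m ≺ Y ≺ I_m (i.e., I_m − Y and I_m + Y are positive definite), and let H be any real symmetric m×m matrix. Then tr( (I_m − Y)⁻¹ H (I_m − Y)⁻¹ H ) + tr( (I_m + Y)⁻¹ H (I_m + Y)⁻¹ H ) ≥ (1/m) · ( tr( ((I_m − Y)⁻¹ − (I_m + Y)⁻¹) H ) )². -/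
/-!
Diagonalise `Y = U diag(λ) U*`. Conjugation by `U` preserves traces, turns `(I - Y)⁻¹` and
`(I + Y)⁻¹` into `diag a` and `diag b` with `aᵢ = (1 - λᵢ)⁻¹ > 0` and `bᵢ = (1 + λᵢ)⁻¹ > 0`, and
turns `H` into a symmetric `P`. Only the diagonal of `P` enters the left-hand side:
`tr((diag a - diag b) P) = ∑ (aᵢ - bᵢ) Pᵢᵢ`, whose square Cauchy–Schwarz bounds by
`m ∑ (aᵢ - bᵢ)² Pᵢᵢ² ≤ m ∑ (aᵢ² + bᵢ²) Pᵢᵢ²`, using `aᵢ bᵢ ≥ 0`. Finally,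
`tr(diag c P diag c P) = ∑ᵢⱼ cᵢ cⱼ Pᵢⱼ²` dominates its diagonal part `∑ cᵢ² Pᵢᵢ²` when `c ≥ 0`.
-/

open Matrix Unitary

namespace Matrix

variable {n R : Type*} [Fintype n] [DecidableEq n]

theorem trace_diagonal_mul [NonUnitalNonAssocSemiring R] (d : n → R) (M : Matrix n n R) :
    trace (diagonal d * M) = ∑ i, d i * M i i := by
  simp [trace, diagonal_mul]

theorem trace_diagonal_mul_diagonal_mul [CommSemiring R] (d e : n → R) (M N : Matrix n n R) :
    trace (diagonal d * M * diagonal e * N) = ∑ i, ∑ j, d i * e j * M i j * N j i := by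
  simp only [trace, diag_apply, mul_apply (N := N), mul_diagonal, diagonal_mul]
  ac_rfl

theorem trace_conjStarAlgAut [CommRing R] [StarRing R] (u : unitary (Matrix n n R))
    (X : Matrix n n R) : trace (conjStarAlgAut R _ u X) = trace X := by
  rw [conjStarAlgAut_apply, trace_mul_cycle, coe_star_mul_self, one_mul]

theorem conjStarAlgAut_diagonal_inv [Field R] [StarRing R] (u : unitary (Matrix n n R))
    {d : n → R} (hd : ∀ i, d i ≠ 0) :
    (conjStarAlgAut R _ u (diagonal d))⁻¹ = conjStarAlgAut R _ u (diagonal d⁻¹) := by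
  refine inv_eq_right_inv ?_
  rw [← map_mul, diagonal_mul_diagonal, ← map_one (conjStarAlgAut R _ u), ← diagonal_one]
  congr 2
  exact funext fun i ↦ mul_inv_cancel₀ (hd i)

theorem posDef_conjStarAlgAut_diagonal_iff [CommRing R] [PartialOrder R] [StarRing R]
    [StarOrderedRing R] [NoZeroDivisors R] [Nontrivial R] (u : unitary (Matrix n n R))
    {d : n → R} : (conjStarAlgAut R _ u (diagonal d)).PosDef ↔ ∀ i, 0 < d i := by
  rw [conjStarAlgAut_apply, isUnit_coe.posDef_star_right_conjugate_iff, posDef_diagonal_iff]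

theorem IsSymm.conjStarAlgAut [CommRing R] [StarRing R] [TrivialStar R] {H : Matrix n n R}
    (hH : H.IsSymm) (u : unitary (Matrix n n R)) :
    (Unitary.conjStarAlgAut R _ u H).IsSymm :=
  isHermitian_iff_isSymm.1 <|
    (isHermitian_iff_isSymm.2 hH).isSelfAdjoint.map (Unitary.conjStarAlgAut R _ u)

theorem IsHermitian.eq_conjStarAlgAut_diagonal_eigenvalues {Y : Matrix n n ℝ}
    (hY : Y.IsHermitian) :
    Y = conjStarAlgAut ℝ _ hY.eigenvectorUnitary (diagonal hY.eigenvalues) := by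
  simpa using hY.spectral_theorem

theorem sum_sq_mul_diag_le_trace_diagonal_mul_diagonal_mul {P : Matrix n n ℝ} (hP : P.IsSymm)
    {c : n → ℝ} (hc : 0 ≤ c) :
    ∑ i, (c i * P i i) ^ 2 ≤ trace (diagonal c * P * diagonal c * P) := by
  rw [trace_diagonal_mul_diagonal_mul]
  gcongr with i
  have hterm (j : n) : 0 ≤ c i * c j * P i j * P j i := by
    rw [hP.apply j i, mul_assoc]
    exact mul_nonneg (mul_nonneg (hc i) (hc j)) (mul_self_nonneg _)
  calc (c i * P i i) ^ 2 = c i * c i * P i i * P i i := by ring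
    _ ≤ ∑ j, c i * c j * P i j * P j i :=
        Finset.single_le_sum (fun j _ ↦ hterm j) (Finset.mem_univ i)

theorem sq_trace_sub_diagonal_mul_le {P : Matrix n n ℝ} (hP : P.IsSymm) {a b : n → ℝ}
    (ha : 0 ≤ a) (hb : 0 ≤ b) :
    trace ((diagonal a - diagonal b) * P) ^ 2 ≤ Fintype.card n *
      (trace (diagonal a * P * diagonal a * P) + trace (diagonal b * P * diagonal b * P)) := by
  rw [diagonal_sub, trace_diagonal_mul]
  calc (∑ i, (a i - b i) * P i i) ^ 2
      ≤ Fintype.card n * ∑ i, ((a i - b i) * P i i) ^ 2 := sq_sum_le_card_mul_sum_sq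
    _ ≤ Fintype.card n * (∑ i, (a i * P i i) ^ 2 + ∑ i, (b i * P i i) ^ 2) := by
        rw [← Finset.sum_add_distrib]
        gcongr with i
        nlinarith [mul_nonneg (mul_nonneg (ha i) (hb i)) (sq_nonneg (P i i))]
    _ ≤ _ := by
        gcongr <;> exact sum_sq_mul_diag_le_trace_diagonal_mul_diagonal_mul hP ‹_›

end Matrix

/-- inequality of Lemma 9.1 of the paper. For a symmetric `m×m` matrix `Y`
with `-I ≺ Y ≺ I` and any symmetric `H`:
`tr((I-Y)⁻¹H(I-Y)⁻¹H) + tr((I+Y)⁻¹H(I+Y)⁻¹H) ≥ (1/m) (tr(((I-Y)⁻¹ - (I+Y)⁻¹)H))²`,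
i.e. the matrix-box barrier satisfies the barrier-parameter bound `ν_F ≤ m`. -/
theorem stmt16 {m : ℕ} (hm : 1 ≤ m)
    (Y : Matrix (Fin m) (Fin m) ℝ) (hY : Y.IsSymm)
    (h1 : ((1 : Matrix (Fin m) (Fin m) ℝ) - Y).PosDef)
    (h2 : ((1 : Matrix (Fin m) (Fin m) ℝ) + Y).PosDef)
    (H : Matrix (Fin m) (Fin m) ℝ) (hH : H.IsSymm) :
    (1 / (m : ℝ)) * (Matrix.trace ((((1 : Matrix (Fin m) (Fin m) ℝ) - Y)⁻¹
        - ((1 : Matrix (Fin m) (Fin m) ℝ) + Y)⁻¹) * H)) ^ 2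
      ≤ Matrix.trace (((1 : Matrix (Fin m) (Fin m) ℝ) - Y)⁻¹ * H
            * ((1 : Matrix (Fin m) (Fin m) ℝ) - Y)⁻¹ * H)
        + Matrix.trace (((1 : Matrix (Fin m) (Fin m) ℝ) + Y)⁻¹ * H
            * ((1 : Matrix (Fin m) (Fin m) ℝ) + Y)⁻¹ * H) := by
  have hYh : Y.IsHermitian := isHermitian_iff_isSymm.2 hY
  set φ := conjStarAlgAut ℝ _ hYh.eigenvectorUnitary
  set μ := hYh.eigenvalues
  have hsub : 1 - Y = φ (diagonal fun i ↦ 1 - μ i) := by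
    rw [hYh.eq_conjStarAlgAut_diagonal_eigenvalues, ← map_one φ, ← map_sub, ← diagonal_one,
      diagonal_sub]
  have hadd : 1 + Y = φ (diagonal fun i ↦ 1 + μ i) := by
    rw [hYh.eq_conjStarAlgAut_diagonal_eigenvalues, ← map_one φ, ← map_add, ← diagonal_one,
      diagonal_add]
  rw [hsub, posDef_conjStarAlgAut_diagonal_iff] at h1
  rw [hadd, posDef_conjStarAlgAut_diagonal_iff] at h2
  set P := φ.symm H
  have hP : P.IsSymm := by simpa [P, φ] using hH.conjStarAlgAut (star hYh.eigenvectorUnitary)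
  rw [← φ.apply_symm_apply H, hsub, hadd, conjStarAlgAut_diagonal_inv _ fun i ↦ (h1 i).ne',
    conjStarAlgAut_diagonal_inv _ fun i ↦ (h2 i).ne']
  simp only [φ, ← map_sub, ← map_mul, trace_conjStarAlgAut]
  rw [one_div_mul_eq_div, div_le_iff₀' (Nat.cast_pos.2 hm)]
  have key := sq_trace_sub_diagonal_mul_le hP (a := (fun i ↦ 1 - μ i)⁻¹)
    (b := (fun i ↦ 1 + μ i)⁻¹) (fun i ↦ (inv_pos.2 (h1 i)).le) (fun i ↦ (inv_pos.2 (h2 i)).le)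
  rwa [Fintype.card_fin] at key
end

section
/- Let E be a finite-dimensional real inner product space, H : E → E a positive definite self-adjoint linear operator, A : E → ℝᵐ a surjective linear map, and s ∈ E. Define u := (A H⁻¹ A*)⁻¹ A H⁻¹ s ∈ ℝᵐ. Then sup{ ⟨s, h⟩ : h ∈ E, Ah = 0, ⟨Hh, h⟩ ≤ 1 } = ⟨H⁻¹(s − A*u), s − A*u⟩^{1/2}, and consequently the square of this supremum equals ⟨H⁻¹s, s⟩ − ⟨(A H⁻¹ A*)⁻¹ A H⁻¹ s, A H⁻¹ s⟩. -/
open scoped RealInnerProductSpace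

/-- Lemma A.1 of the paper. Let `H` be positive definite self-adjoint with
inverse `Hinv`, `A : E → ℝᵐ` surjective with `Ginv` the inverse of `A H⁻¹ A*`, and
`u = (A H⁻¹ A*)⁻¹ A H⁻¹ s`. Then
`sup{⟨s,h⟩ : Ah = 0, ⟨Hh,h⟩ ≤ 1} = ⟨H⁻¹(s - A*u), s - A*u⟩^{1/2}`, and the square of this
supremum equals `⟨H⁻¹s, s⟩ - ⟨(A H⁻¹ A*)⁻¹ A H⁻¹ s, A H⁻¹ s⟩`. -/
theorem stmt17 {E : Type*} [NormedAddCommGroup E] [InnerProductSpace ℝ E]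
    [FiniteDimensional ℝ E] {m : ℕ}
    (H : E →ₗ[ℝ] E) (hsym : ∀ u v : E, ⟪H u, v⟫ = ⟪u, H v⟫)
    (hpos : ∀ u : E, u ≠ 0 → 0 < ⟪H u, u⟫)
    (Hinv : E →ₗ[ℝ] E) (hHinv : Hinv ∘ₗ H = LinearMap.id) (hHinv' : H ∘ₗ Hinv = LinearMap.id)
    (A : E →ₗ[ℝ] EuclideanSpace ℝ (Fin m)) (hA : Function.Surjective A)
    (s : E)
    (Ginv : EuclideanSpace ℝ (Fin m) →ₗ[ℝ] EuclideanSpace ℝ (Fin m))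
    (hGinv : Ginv ∘ₗ (A ∘ₗ Hinv ∘ₗ (LinearMap.adjoint A)) = LinearMap.id)
    (hGinv' : (A ∘ₗ Hinv ∘ₗ (LinearMap.adjoint A)) ∘ₗ Ginv = LinearMap.id)
    (u : EuclideanSpace ℝ (Fin m)) (hu : u = Ginv (A (Hinv s))) :
    sSup {r : ℝ | ∃ h : E, A h = 0 ∧ ⟪H h, h⟫ ≤ 1 ∧ r = ⟪s, h⟫}
      = Real.sqrt ⟪Hinv (s - LinearMap.adjoint A u), s - LinearMap.adjoint A u⟫ ∧
    (sSup {r : ℝ | ∃ h : E, A h = 0 ∧ ⟪H h, h⟫ ≤ 1 ∧ r = ⟪s, h⟫}) ^ 2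
      = ⟪Hinv s, s⟫ - ⟪Ginv (A (Hinv s)), A (Hinv s)⟫ := by
  have hHH : ∀ x : E, H (Hinv x) = x := fun x => congrArg (fun f => f x) hHinv'
  have hHH' : ∀ x : E, Hinv (H x) = x := fun x => congrArg (fun f => f x) hHinv
  -- Hinv is symmetric
  have hHinvsym : ∀ x y : E, ⟪Hinv x, y⟫ = ⟪x, Hinv y⟫ := by
    intro x y
    calc ⟪Hinv x, y⟫ = ⟪Hinv x, H (Hinv y)⟫ := by rw [hHH]
      _ = ⟪H (Hinv x), Hinv y⟫ := (hsym _ _).symm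
      _ = ⟪x, Hinv y⟫ := by rw [hHH]
  set v : EuclideanSpace ℝ (Fin m) := A (Hinv s) with hv
  set w : E := s - LinearMap.adjoint A u with hw
  set h₀ : E := Hinv w with hh0
  have hHh0 : H h₀ = w := hHH w
  have hGG : ∀ y, A (Hinv (LinearMap.adjoint A (Ginv y))) = y := fun y =>
    congrArg (fun f => f y) hGinv'
  have hAh0 : A h₀ = 0 := by
    have : A (Hinv (s - LinearMap.adjoint A u)) =
        A (Hinv s) - A (Hinv (LinearMap.adjoint A u)) := by
      rw [map_sub, map_sub]
    rw [hh0, hw, this, hu, hGG]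
    simp [hv]
  set a : ℝ := ⟪Hinv w, w⟫ with ha
  have ha' : a = ⟪H h₀, h₀⟫ := by
    rw [hHh0, ha, real_inner_comm]
  have ha_nonneg : 0 ≤ a := by
    rw [ha']
    by_cases h : h₀ = 0
    · simp [h]
    · exact le_of_lt (hpos h₀ h)
  set c : ℝ := Real.sqrt a with hc
  have hc2 : c ^ 2 = a := Real.sq_sqrt ha_nonneg
  have hc_nonneg : 0 ≤ c := Real.sqrt_nonneg a
  -- key: on ker A, ⟪s,h⟫ = ⟪w,h⟫
  have hkey : ∀ h : E, A h = 0 → ⟪s, h⟫ = ⟪w, h⟫ := by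
    intro h hAh
    rw [hw, inner_sub_left, LinearMap.adjoint_inner_left, hAh, inner_zero_right, sub_zero]
  set S : Set ℝ := {r : ℝ | ∃ h : E, A h = 0 ∧ ⟪H h, h⟫ ≤ 1 ∧ r = ⟪s, h⟫} with hS
  -- upper bound
  have hub : ∀ r ∈ S, r ≤ c := by
    rintro r ⟨h, hAh, hHh, rfl⟩
    rw [hkey h hAh]
    by_cases hh : h = 0
    · simp [hh, hc_nonneg]
    · set d : ℝ := ⟪H h, h⟫ with hd
      have hd_pos : 0 < d := hpos h hh
      set b : ℝ := ⟪w, h⟫ with hb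
      have hb' : b = ⟪H h₀, h⟫ := by rw [hHh0]
      -- quadratic nonneg at t = -b/d
      have hquad : ∀ t : ℝ, 0 ≤ a + 2 * t * b + t ^ 2 * d := by
        intro t
        have hexp : ⟪H (h₀ + t • h), h₀ + t • h⟫ = a + 2 * t * b + t ^ 2 * d := by
          have hcross : ⟪H h, h₀⟫ = ⟪H h₀, h⟫ := by
            rw [hsym, real_inner_comm]
          rw [map_add, map_smul, inner_add_left, inner_add_right, inner_add_right,
            real_inner_smul_left, real_inner_smul_right, real_inner_smul_left,
            real_inner_smul_right]
          rw [hcross, ← ha', ← hb', hd]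
          ring
        rw [← hexp]
        by_cases hz : h₀ + t • h = 0
        · simp [hz]
        · exact le_of_lt (hpos _ hz)
      have hbsq : b ^ 2 ≤ a * d := by
        have hq := hquad (-b / d)
        have hd0 : d ≠ 0 := ne_of_gt hd_pos
        have hcalc : a + 2 * (-b / d) * b + (-b / d) ^ 2 * d = a - b ^ 2 / d := by
          field_simp; ring
        rw [hcalc] at hq
        have : b ^ 2 / d ≤ a := by linarith
        calc b ^ 2 = b ^ 2 / d * d := by field_simp
          _ ≤ a * d := mul_le_mul_of_nonneg_right this (le_of_lt hd_pos)
      have hbsq' : b ^ 2 ≤ a := by nlinarith [hd_pos, ha_nonneg]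
      by_cases hbneg : b ≤ 0
      · exact le_trans hbneg hc_nonneg
      · push_neg at hbneg
        rw [hc]
        rw [show b = Real.sqrt (b ^ 2) by rw [Real.sqrt_sq (le_of_lt hbneg)]]
        exact Real.sqrt_le_sqrt hbsq'
  -- c is attained
  have hmem : c ∈ S := by
    by_cases hw0 : w = 0
    · have : c = 0 := by
        rw [hc, ha, hw0]
        simp
      rw [this]
      exact ⟨0, by simp, by simp, by simp⟩
    · have hh0ne : h₀ ≠ 0 := by
        intro h
        apply hw0
        rw [← hHh0, h, map_zero]
      have ha_pos : 0 < a := by rw [ha']; exact hpos h₀ hh0ne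
      have hc_pos : 0 < c := Real.sqrt_pos.mpr ha_pos
      refine ⟨c⁻¹ • h₀, ?_, ?_, ?_⟩
      · rw [map_smul, hAh0, smul_zero]
      · rw [map_smul, real_inner_smul_left, real_inner_smul_right]
        rw [← ha', ← hc2]
        have hc0 : c ≠ 0 := ne_of_gt hc_pos
        rw [show c⁻¹ * (c⁻¹ * c ^ 2) = 1 by field_simp]
      · rw [real_inner_smul_right, hkey h₀ hAh0]
        have : ⟪w, h₀⟫ = a := by rw [ha, real_inner_comm]
        rw [this]
        rw [eq_comm, inv_mul_eq_div, div_eq_iff (ne_of_gt hc_pos), ← hc2]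
        ring
  have hsup : sSup S = c := IsGreatest.csSup_eq ⟨hmem, hub⟩
  constructor
  · exact hsup
  · rw [hsup, hc2, ha, hw, ← hu]
    -- expand a
    have e1 : ⟪Hinv s, LinearMap.adjoint A u⟫ = ⟪v, u⟫ := by
      rw [LinearMap.adjoint_inner_right, hv]
    have e2 : ⟪Hinv (LinearMap.adjoint A u), s⟫ = ⟪u, v⟫ := by
      rw [hHinvsym, LinearMap.adjoint_inner_left, hv]
    have e3 : ⟪Hinv (LinearMap.adjoint A u), LinearMap.adjoint A u⟫ = ⟪v, u⟫ := by
      rw [LinearMap.adjoint_inner_right]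
      have : A (Hinv (LinearMap.adjoint A u)) = v := by rw [hu, hGG]
      rw [this]
    rw [map_sub, inner_sub_left, inner_sub_right, inner_sub_right, e1, e2, e3]
    ring
end

section
/- Let a, b ∈ ℝⁿ with ⟨a, b⟩ > 0. Then every real symmetric positive semidefinite n×n matrix X with X a = b satisfies tr X ≥ ‖b‖²/⟨a, b⟩, and the matrix X* := b bᵀ/⟨a, b⟩ is symmetric positive semidefinite, satisfies X* a = b, and attains tr X* = ‖b‖²/⟨a, b⟩. Hence the optimal value of the problem min{ tr X : X symmetric positive semidefinite, X a = b } equals ‖b‖²/⟨a, b⟩. -/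
/-!
Cauchy–Schwarz for the semi-inner product `⟨x, y⟩_X = xᵀ X y` of a positive semidefinite `X`,
applied to `eᵢ` and `a`, gives `(X a)ᵢ² ≤ Xᵢᵢ · aᵀ X a`. Summing over `i` with `X a = b` yields
`‖b‖² ≤ tr X · ⟨a, b⟩`, and the rank-one matrix `b bᵀ / ⟨a, b⟩` is feasible with equality.
-/

open Matrix

namespace Matrix

section

variable {R : Type*} [Field R] [LinearOrder R] [IsStrictOrderedRing R] [StarRing R] [TrivialStar R]
  {ι : Type*} [Fintype ι]

theorem PosSemidef.dotProduct_mulVec_sq_le {X : Matrix ι ι R} (hX : X.PosSemidef) (x y : ι → R) :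
    (x ⬝ᵥ X *ᵥ y) ^ 2 ≤ (x ⬝ᵥ X *ᵥ x) * (y ⬝ᵥ X *ᵥ y) := by
  have hsymm : y ⬝ᵥ X *ᵥ x = x ⬝ᵥ X *ᵥ y := by
    rw [dotProduct_mulVec, ← mulVec_transpose, dotProduct_comm,
      ← conjTranspose_eq_transpose_of_trivial, hX.isHermitian.eq]
  -- `t ↦ (x + t y)ᵀ X (x + t y)` is a nonnegative quadratic, so its discriminant is `≤ 0`.
  have hquad : ∀ t : R, 0 ≤ (y ⬝ᵥ X *ᵥ y) * (t * t) + 2 * (x ⬝ᵥ X *ᵥ y) * t + x ⬝ᵥ X *ᵥ x := by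
    intro t
    have := hX.dotProduct_mulVec_nonneg (x + t • y)
    simp only [star_trivial, mulVec_add, mulVec_smul, add_dotProduct, dotProduct_add,
      smul_dotProduct, dotProduct_smul, smul_eq_mul, hsymm] at this
    linarith
  have := discrim_le_zero hquad
  rw [discrim] at this
  nlinarith

theorem PosSemidef.mulVec_apply_sq_le {X : Matrix ι ι R} (hX : X.PosSemidef) (a : ι → R) (i : ι) :
    (X *ᵥ a) i ^ 2 ≤ X i i * (a ⬝ᵥ X *ᵥ a) := by
  classical
  simpa [mulVec_single, single_dotProduct] using hX.dotProduct_mulVec_sq_le (Pi.single i 1) a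

theorem PosSemidef.dotProduct_mulVec_self_le_trace_mul {X : Matrix ι ι R} (hX : X.PosSemidef)
    (a : ι → R) :
    (X *ᵥ a) ⬝ᵥ (X *ᵥ a) ≤ X.trace * (a ⬝ᵥ X *ᵥ a) := by
  simpa only [dotProduct, trace, diag, Finset.sum_mul, ← sq] using
    Finset.sum_le_sum fun i _ => hX.mulVec_apply_sq_le a i

theorem PosSemidef.div_le_trace_of_mulVec_eq {X : Matrix ι ι R} (hX : X.PosSemidef) {a b : ι → R}
    (hab : 0 < a ⬝ᵥ b) (hXa : X *ᵥ a = b) : (b ⬝ᵥ b) / (a ⬝ᵥ b) ≤ X.trace := by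
  rw [div_le_iff₀ hab]
  simpa only [hXa] using hX.dotProduct_mulVec_self_le_trace_mul a

end

theorem posSemidef_smul_vecMulVec_self {R : Type*} [CommRing R] [PartialOrder R] [StarRing R]
    [StarOrderedRing R] [TrivialStar R] {ι : Type*} [Finite ι] {c : R} (hc : 0 ≤ c) (b : ι → R) :
    (c • vecMulVec b b).PosSemidef := by
  simpa only [star_trivial] using (posSemidef_vecMulVec_self_star b).smul hc

theorem smul_vecMulVec_mulVec_eq_self {K : Type*} [Field K] {ι : Type*} [Fintype ι] {a b : ι → K}
    (hab : a ⬝ᵥ b ≠ 0) : ((a ⬝ᵥ b)⁻¹ • vecMulVec b b) *ᵥ a = b := by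
  rw [smul_mulVec, vecMulVec_mulVec, op_smul_eq_smul, dotProduct_comm b a, smul_smul,
    inv_mul_cancel₀ hab, one_smul]

end Matrix

/-- Example 3.2 of the paper, optimal solution claim. For `a, b ∈ ℝⁿ` with
`⟨a,b⟩ > 0`: every symmetric positive semidefinite `X` with `X a = b` has
`tr X ≥ ‖b‖²/⟨a,b⟩`; the matrix `X* = b bᵀ/⟨a,b⟩` is positive semidefinite, satisfies
`X* a = b` and `tr X* = ‖b‖²/⟨a,b⟩`; hence the optimal value of
`min{tr X : X ⪰ 0, X a = b}` equals `‖b‖²/⟨a,b⟩`. -/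
theorem stmt18 {n : ℕ} (a b : Fin n → ℝ) (hab : 0 < a ⬝ᵥ b) :
    (∀ X : Matrix (Fin n) (Fin n) ℝ, X.PosSemidef → X.mulVec a = b →
      (b ⬝ᵥ b) / (a ⬝ᵥ b) ≤ X.trace) ∧
    ((((a ⬝ᵥ b)⁻¹) • Matrix.vecMulVec b b).PosSemidef ∧
      (((a ⬝ᵥ b)⁻¹) • Matrix.vecMulVec b b).mulVec a = b ∧
      (((a ⬝ᵥ b)⁻¹) • Matrix.vecMulVec b b).trace = (b ⬝ᵥ b) / (a ⬝ᵥ b)) ∧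
    IsLeast {v : ℝ | ∃ X : Matrix (Fin n) (Fin n) ℝ,
        X.PosSemidef ∧ X.mulVec a = b ∧ v = X.trace}
      ((b ⬝ᵥ b) / (a ⬝ᵥ b)) := by
  have lower_bound : ∀ X : Matrix (Fin n) (Fin n) ℝ, X.PosSemidef → X.mulVec a = b →
      (b ⬝ᵥ b) / (a ⬝ᵥ b) ≤ X.trace :=
    fun X hX hXa => hX.div_le_trace_of_mulVec_eq hab hXa
  have psd := posSemidef_smul_vecMulVec_self (inv_nonneg.mpr hab.le) b
  have feasible := smul_vecMulVec_mulVec_eq_self hab.ne'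
  have trace_eq : ((a ⬝ᵥ b)⁻¹ • vecMulVec b b).trace = (b ⬝ᵥ b) / (a ⬝ᵥ b) := by
    rw [trace_smul, trace_vecMulVec, smul_eq_mul, inv_mul_eq_div]
  refine ⟨lower_bound, ⟨psd, feasible, trace_eq⟩, ⟨_, psd, feasible, trace_eq.symm⟩, ?_⟩
  rintro _ ⟨X, hX, hXa, rfl⟩
  exact lower_bound X hX hXa
end
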